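/- arXiv:2304.08236 — 8 statements merged into one kernel-verified Lean document; each statement's English description precedes it below -/
import Mathlib

section
/- Let n ≥ 2 be an integer, q > 0, and a_2, …, a_n ≥ 0 with a_n > 0, and for r > 0 let E(r) > 0 be the unique solution of (1 + Σ_{k=2}^n (k a_k / 2^{k−1}) E^{2(k−1)}) E = q/r². Then lim_{r→∞} r² E(r) = q (Coulomb behavior at infinity) and lim_{r→0⁺} r^{2/(2n−1)} E(r) = (2^{n−1} q / (n a_n))^{1/(2n−1)} (relegated singularity at the origin). -/
open Topology Filter Finset

/-! As `r → ∞` the field tends to `0`, where the permittivity `f'(E²/2)` tends to `1`,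
so `r² E = q / f'(E²/2) → q`. As `r → 0⁺` the right-hand side `q/r²` blows up, and since
`E ↦ f'(E²/2) E` is increasing the field blows up too; there the permittivity behaves like its
leading term `(n aₙ / 2ⁿ⁻¹) E^{2n-2}`, so `r² E^{2n-1} → 2ⁿ⁻¹ q / (n aₙ)`. -/

theorem tendsto_sum_mul_pow_div_pow_atTop {𝕜 : Type*} [Field 𝕜] [LinearOrder 𝕜]
    [IsStrictOrderedRing 𝕜] [TopologicalSpace 𝕜] [OrderTopology 𝕜]
    {s : Finset ℕ} {e : ℕ → ℕ} {m : ℕ} (c : ℕ → 𝕜) (hm : m ∈ s)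
    (he : ∀ k ∈ s, k ≠ m → e k < e m) :
    Tendsto (fun x : 𝕜 => (∑ k ∈ s, c k * x ^ e k) / x ^ e m) atTop (𝓝 (c m)) := by
  have hterm : ∀ k ∈ s, Tendsto (fun x : 𝕜 => c k * (x ^ e k / x ^ e m)) atTop
      (𝓝 (if m = k then c m else 0)) := by
    intro k hk
    split_ifs with hkm
    · subst hkm
      refine tendsto_const_nhds.congr' ?_
      filter_upwards [eventually_gt_atTop 0] with x hx
      rw [div_self (pow_pos hx _).ne', mul_one]
    · simpa using (tendsto_pow_div_pow_atTop_zero (he k hk (Ne.symm hkm))).const_mul (c k)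
  simpa [sum_div, mul_div_assoc, sum_ite_eq, hm] using tendsto_finsetSum s hterm

section Constitutive

variable {P E : ℝ → ℝ} {q : ℝ}

theorem tendsto_sq_mul_atTop_of_mul_eq (hP : ∀ x, 0 ≤ x → 1 ≤ P x) (hPc : ContinuousAt P 0)
    (hP0 : P 0 = 1) (hE : ∀ r, 0 < r → 0 < E r)
    (heq : ∀ r, 0 < r → P (E r) * E r = q / r ^ 2) :
    Tendsto (fun r => r ^ 2 * E r) atTop (𝓝 q) := by
  have hE0 : Tendsto E atTop (𝓝 0) := by
    refine tendsto_of_tendsto_of_tendsto_of_le_of_le' tendsto_const_nhds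
      ((tendsto_const_nhds (x := q)).div_atTop (tendsto_pow_atTop two_ne_zero)) ?_ ?_
      <;> filter_upwards [eventually_gt_atTop 0] with r hr
    · exact (hE r hr).le
    · rw [← heq r hr]
      exact le_mul_of_one_le_left (hE r hr).le (hP _ (hE r hr).le)
  have hPE : Tendsto (fun r => P (E r)) atTop (𝓝 1) := hP0 ▸ hPc.tendsto.comp hE0
  refine (by simpa using (hPE.inv₀ one_ne_zero).const_mul q :
    Tendsto (fun r => q * (P (E r))⁻¹) atTop (𝓝 q)).congr' ?_
  filter_upwards [eventually_gt_atTop 0] with r hr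
  have hPpos : 0 < P (E r) := zero_lt_one.trans_le (hP _ (hE r hr).le)
  have hq : q = P (E r) * E r * r ^ 2 := by rw [heq r hr]; field_simp
  rw [hq]
  field_simp

theorem tendsto_atTop_nhdsGT_zero_of_mul_eq (hq : 0 < q) (hP : ∀ x, 0 ≤ x → 0 ≤ P x)
    (hPmono : MonotoneOn P (Set.Ici 0)) (hE : ∀ r, 0 < r → 0 < E r)
    (heq : ∀ r, 0 < r → P (E r) * E r = q / r ^ 2) :
    Tendsto E (𝓝[>] 0) atTop := by
  have hmono : MonotoneOn (fun x => P x * x) (Set.Ici 0) :=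
    hPmono.mul monotoneOn_id hP fun _ hx => hx
  have hrhs : Tendsto (fun r : ℝ => q / r ^ 2) (𝓝[>] 0) atTop := by
    refine ((tendsto_pow_atTop two_ne_zero).comp tendsto_inv_nhdsGT_zero).atTop_mul_const hq
      |>.congr fun r => ?_
    simp [div_eq_mul_inv, mul_comm]
  rw [tendsto_atTop]
  intro M
  filter_upwards [hrhs.eventually_gt_atTop (P (max M 0) * max M 0), self_mem_nhdsWithin]
    with r hr (hr0 : 0 < r)
  by_contra! hlt
  have := hmono (hE r hr0).le (le_max_right M 0) (hlt.le.trans (le_max_left M 0))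
  linarith [heq r hr0]

theorem tendsto_sq_mul_pow_nhdsGT_zero_of_mul_eq {m : ℕ} {c : ℝ} (hc : 0 < c) (hq : 0 < q)
    (hP : ∀ x, 0 ≤ x → 1 ≤ P x) (hPmono : MonotoneOn P (Set.Ici 0))
    (hPlim : Tendsto (fun x => P x / x ^ m) atTop (𝓝 c)) (hE : ∀ r, 0 < r → 0 < E r)
    (heq : ∀ r, 0 < r → P (E r) * E r = q / r ^ 2) :
    Tendsto (fun r => r ^ 2 * E r ^ (m + 1)) (𝓝[>] 0) (𝓝 (q / c)) := by
  have hEinf := tendsto_atTop_nhdsGT_zero_of_mul_eq hq (fun x hx => zero_le_one.trans (hP x hx))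
    hPmono hE heq
  refine ((hPlim.comp hEinf).inv₀ hc.ne').const_mul q |>.congr' ?_
  filter_upwards [self_mem_nhdsWithin] with r (hr : 0 < r)
  have hq : q = P (E r) * E r * r ^ 2 := by rw [heq r hr]; field_simp
  have hPpos : 0 < P (E r) := zero_lt_one.trans_le (hP _ (hE r hr).le)
  have hEpos := hE r hr
  simp only [Function.comp_apply, hq]
  field_simp
  ring

theorem tendsto_rpow_mul_nhdsGT_zero_of_mul_eq {m : ℕ} {c : ℝ} (hc : 0 < c) (hq : 0 < q)
    (hP : ∀ x, 0 ≤ x → 1 ≤ P x) (hPmono : MonotoneOn P (Set.Ici 0))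
    (hPlim : Tendsto (fun x => P x / x ^ m) atTop (𝓝 c)) (hE : ∀ r, 0 < r → 0 < E r)
    (heq : ∀ r, 0 < r → P (E r) * E r = q / r ^ 2) :
    Tendsto (fun r => r ^ ((2 : ℝ) / (m + 1)) * E r) (𝓝[>] 0)
      (𝓝 ((q / c) ^ ((1 : ℝ) / (m + 1)))) := by
  have hlim := tendsto_sq_mul_pow_nhdsGT_zero_of_mul_eq hc hq hP hPmono hPlim hE heq
  refine (Real.continuousAt_rpow_const _ _ (Or.inr (by positivity))).tendsto.comp hlim
    |>.congr' ?_
  filter_upwards [self_mem_nhdsWithin] with r (hr : 0 < r)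
  have hEpos := hE r hr
  rw [Function.comp_apply, Real.mul_rpow (by positivity) (by positivity),
    ← Real.rpow_natCast (E r), ← Real.rpow_mul hEpos.le, ← Real.rpow_natCast r,
    ← Real.rpow_mul hr.le, Nat.cast_add, Nat.cast_one, mul_one_div, mul_one_div,
    div_self (by positivity), Real.rpow_one]
  norm_num

end Constitutive

section Permittivity

variable {c : ℕ → ℝ} {n : ℕ}

/-- `f'(E²/2)` for `f(s) = s + ∑ aₖ sᵏ`, written with `c k = k aₖ / 2ᵏ⁻¹`. -/
def permittivity (c : ℕ → ℝ) (n : ℕ) (x : ℝ) : ℝ :=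
  1 + ∑ k ∈ Icc 2 n, c k * x ^ (2 * (k - 1))

theorem permittivity_zero : permittivity c n 0 = 1 := by
  refine add_eq_left.2 (sum_eq_zero fun k hk => ?_)
  rw [zero_pow (by grind), mul_zero]

theorem continuous_permittivity : Continuous (permittivity c n) := by
  unfold permittivity
  fun_prop

theorem one_le_permittivity (hc : ∀ k ∈ Icc 2 n, 0 ≤ c k) {x : ℝ} (hx : 0 ≤ x) :
    1 ≤ permittivity c n x :=
  le_add_of_nonneg_right (sum_nonneg fun k hk => mul_nonneg (hc k hk) (pow_nonneg hx _))

theorem monotoneOn_permittivity (hc : ∀ k ∈ Icc 2 n, 0 ≤ c k) :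
    MonotoneOn (permittivity c n) (Set.Ici 0) :=
  fun _ hx _ _ hxy => add_le_add_right (sum_le_sum fun k hk =>
    mul_le_mul_of_nonneg_left (pow_le_pow_left₀ hx hxy _) (hc k hk)) 1

theorem tendsto_permittivity_div_pow_atTop (hn : 2 ≤ n) :
    Tendsto (fun x => permittivity c n x / x ^ (2 * (n - 1))) atTop (𝓝 (c n)) := by
  have hconst : Tendsto (fun x : ℝ => x ^ 0 / x ^ (2 * (n - 1))) atTop (𝓝 0) :=
    tendsto_pow_div_pow_atTop_zero (by omega)
  have hsum := tendsto_sum_mul_pow_div_pow_atTop (e := fun k => 2 * (k - 1)) c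
    (mem_Icc.2 ⟨hn, le_rfl⟩) fun k hk hkn => by grind
  simpa [permittivity, add_div] using hconst.add hsum

end Permittivity

/-- Asymptotics of the radial electric field of a point charge in the polynomial model:
Coulomb behavior `E(r) ~ q/r²` at infinity and the relegated singularity
`E(r) ~ (2^{n-1} q/(n a_n))^{1/(2n-1)} r^{-2/(2n-1)}` at the origin. -/
theorem stmt2 (n : ℕ) (hn : 2 ≤ n) (q : ℝ) (hq : 0 < q)
    (a : ℕ → ℝ) (ha : ∀ k, 2 ≤ k → k ≤ n → 0 ≤ a k) (han : 0 < a n)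
    (E : ℝ → ℝ) (hE : ∀ r, 0 < r → 0 < E r)
    (heq : ∀ r, 0 < r →
      (1 + ∑ k ∈ Finset.Icc 2 n, ((k : ℝ) * a k / 2 ^ (k - 1)) * E r ^ (2 * (k - 1))) * E r
        = q / r ^ 2) :
    Tendsto (fun r => r ^ 2 * E r) atTop (𝓝 q) ∧
    Tendsto (fun r => r ^ ((2 : ℝ) / (2 * (n : ℝ) - 1)) * E r) (𝓝[>] (0 : ℝ))
      (𝓝 (((2 : ℝ) ^ (n - 1) * q / ((n : ℝ) * a n)) ^ ((1 : ℝ) / (2 * (n : ℝ) - 1)))) := by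
  set c : ℕ → ℝ := fun k => (k : ℝ) * a k / 2 ^ (k - 1)
  have hc : ∀ k ∈ Icc 2 n, 0 ≤ c k := fun k hk => by
    have := ha k (mem_Icc.1 hk).1 (mem_Icc.1 hk).2
    positivity
  have hn0 : (0 : ℝ) < n := by exact_mod_cast (by omega : 0 < n)
  have hcn : 0 < c n := by positivity
  have hP1 (x : ℝ) (hx : 0 ≤ x) := one_le_permittivity hc hx
  refine ⟨tendsto_sq_mul_atTop_of_mul_eq hP1 continuous_permittivity.continuousAt
    permittivity_zero hE heq, ?_⟩
  have hexp : 2 * (n : ℝ) - 1 = ((2 * (n - 1) : ℕ) : ℝ) + 1 := by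
    rw [Nat.cast_mul, Nat.cast_sub (by omega)]
    push_cast
    ring
  have hlim : (2 : ℝ) ^ (n - 1) * q / (n * a n) = q / c n := by
    simp only [c]
    field_simp
  rw [hexp, hlim]
  exact tendsto_rpow_mul_nhdsGT_zero_of_mul_eq hcn hq hP1 (monotoneOn_permittivity hc)
    (tendsto_permittivity_div_pow_atTop hn) hE heq
end

section
/- Let n ≥ 2 be an integer, q > 0, and a_2, …, a_n ≥ 0 with a_n > 0. For r > 0 let E(r) > 0 be the unique solution of (1 + Σ_{k=2}^n (k a_k/2^{k−1}) E^{2(k−1)}) E = q/r², and define H(r) = (1 + Σ_{k=2}^n (k a_k/2^{k−1}) E(r)^{2(k−1)}) E(r)² − (E(r)²/2 + Σ_{k=2}^n (a_k/2^k) E(r)^{2k}). Then the function r ↦ H(r) r² is integrable on (0,∞); in particular, the total energy 4π ∫₀^∞ H(r) r² dr of an electric point charge is finite in every such polynomial model. -/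
open MeasureTheory

/-- Finiteness of the total energy of an electric point charge in the polynomial model:
`r ↦ H(r) r²` is integrable on `(0,∞)`. -/
theorem stmt4 (n : ℕ) (hn : 2 ≤ n) (q : ℝ) (hq : 0 < q)
    (a : ℕ → ℝ) (ha : ∀ k, 2 ≤ k → k ≤ n → 0 ≤ a k) (han : 0 < a n)
    (E : ℝ → ℝ) (hE : ∀ r, 0 < r → 0 < E r)
    (heq : ∀ r, 0 < r →
      (1 + ∑ k ∈ Finset.Icc 2 n, ((k : ℝ) * a k / 2 ^ (k - 1)) * E r ^ (2 * (k - 1))) * E r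
        = q / r ^ 2)
    (H : ℝ → ℝ)
    (hH : ∀ r, 0 < r → H r =
      (1 + ∑ k ∈ Finset.Icc 2 n, ((k : ℝ) * a k / 2 ^ (k - 1)) * E r ^ (2 * (k - 1))) * E r ^ 2
        - (E r ^ 2 / 2 + ∑ k ∈ Finset.Icc 2 n, (a k / 2 ^ k) * E r ^ (2 * k))) :
    IntegrableOn (fun r => H r * r ^ 2) (Set.Ioi (0 : ℝ)) := by
  -- abbreviations
  set c : ℕ → ℝ := fun k => (k : ℝ) * a k / 2 ^ (k - 1) with hc
  have hc0 : ∀ k ∈ Finset.Icc 2 n, 0 ≤ c k := by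
    intro k hk
    obtain ⟨hk2, hkn⟩ := Finset.mem_Icc.mp hk
    have := ha k hk2 hkn
    positivity
  have hcn : 0 < c n := by
    have h2 : (2:ℝ) ≤ (n:ℝ) := by exact_mod_cast hn
    have : (0:ℝ) < (n:ℝ) := by linarith
    positivity
  -- the strictly monotone function g
  set g : ℝ → ℝ := fun x => x + ∑ k ∈ Finset.Icc 2 n, c k * x ^ (2 * k - 1) with hg
  have hgmono : StrictMono g := by
    have hsum : Monotone fun x : ℝ => ∑ k ∈ Finset.Icc 2 n, c k * x ^ (2 * k - 1) := by
      intro x y hxy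
      apply Finset.sum_le_sum
      intro k hk
      have hodd : Odd (2 * k - 1) := by
        have : 2 ≤ k := (Finset.mem_Icc.mp hk).1
        exact ⟨k - 1, by omega⟩
      exact mul_le_mul_of_nonneg_left ((hodd.strictMono_pow (R := ℝ)).monotone hxy) (hc0 k hk)
    exact fun x y hxy => add_lt_add_of_lt_of_le hxy (hsum hxy.le)
  have hgcont : Continuous g := by
    apply continuous_id.add
    exact continuous_finset_sum _ fun k _ => continuous_const.mul (continuous_pow _)
  have hid_le : ∀ x : ℝ, 0 ≤ x → x ≤ g x := by
    intro x hx
    have : 0 ≤ ∑ k ∈ Finset.Icc 2 n, c k * x ^ (2 * k - 1) :=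
      Finset.sum_nonneg fun k hk => mul_nonneg (hc0 k hk) (pow_nonneg hx _)
    simp only [hg]; linarith
  have hle_id : ∀ x : ℝ, x ≤ 0 → g x ≤ x := by
    intro x hx
    have : ∑ k ∈ Finset.Icc 2 n, c k * x ^ (2 * k - 1) ≤ 0 := by
      apply Finset.sum_nonpos
      intro k hk
      have hodd : Odd (2 * k - 1) := by
        have : 2 ≤ k := (Finset.mem_Icc.mp hk).1
        exact ⟨k - 1, by omega⟩
      exact mul_nonpos_of_nonneg_of_nonpos (hc0 k hk) (hodd.pow_nonpos hx)
    simp only [hg]; linarith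
  have hgsurj : Function.Surjective g := by
    apply hgcont.surjective
    · apply Filter.tendsto_atTop_mono' _ _ Filter.tendsto_id
      filter_upwards [Filter.eventually_ge_atTop (0:ℝ)] with x hx
      exact hid_le x hx
    · apply Filter.tendsto_atBot_mono' _ _ Filter.tendsto_id
      filter_upwards [Filter.eventually_le_atBot (0:ℝ)] with x hx
      exact hle_id x hx
  set e : ℝ ≃o ℝ := StrictMono.orderIsoOfSurjective g hgmono hgsurj with he
  -- E satisfies g (E r) = q / r ^ 2
  have hg_eq : ∀ r, 0 < r → g (E r) = q / r ^ 2 := by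
    intro r hr
    rw [← heq r hr]
    simp only [hg, add_mul, one_mul, Finset.sum_mul]
    congr 1
    apply Finset.sum_congr rfl
    intro k hk
    have hk2 : 2 ≤ k := (Finset.mem_Icc.mp hk).1
    have hex : 2 * k - 1 = 2 * (k - 1) + 1 := by omega
    rw [hex, pow_succ, mul_assoc]
  have hEeq : ∀ r, 0 < r → E r = e.symm (q / r ^ 2) := by
    intro r hr
    rw [← hg_eq r hr]
    exact (StrictMono.orderIsoOfSurjective_symm_apply_self g hgmono hgsurj (E r)).symm
  -- formula for H with nonneg coefficients
  have hHformula : ∀ r, 0 < r →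
      H r = E r ^ 2 / 2 + ∑ k ∈ Finset.Icc 2 n, (c k - a k / 2 ^ k) * E r ^ (2 * k) := by
    intro r hr
    rw [hH r hr, add_mul, one_mul]
    have h1 : (∑ k ∈ Finset.Icc 2 n, c k * E r ^ (2 * (k - 1))) * E r ^ 2
        = ∑ k ∈ Finset.Icc 2 n, c k * E r ^ (2 * k) := by
      rw [Finset.sum_mul]
      apply Finset.sum_congr rfl
      intro k hk
      have hk2 : 2 ≤ k := (Finset.mem_Icc.mp hk).1
      have hex : 2 * k = 2 * (k - 1) + 2 := by omega
      rw [hex, pow_add, mul_assoc]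
    rw [h1]
    simp only [sub_mul, Finset.sum_sub_distrib]
    ring
  have hd0 : ∀ k ∈ Finset.Icc 2 n, 0 ≤ c k - a k / 2 ^ k := by
    intro k hk
    obtain ⟨hk2, hkn⟩ := Finset.mem_Icc.mp hk
    have hak : 0 ≤ a k := ha k hk2 hkn
    have h2 : (2:ℝ) ^ k = 2 * 2 ^ (k - 1) := by
      rw [← pow_succ']
      congr 1
      omega
    have hk1 : (1:ℝ) ≤ (k:ℝ) := by exact_mod_cast le_trans (by norm_num) hk2
    rw [sub_nonneg, hc, h2]
    rw [div_le_div_iff₀ (by positivity) (by positivity)]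
    have hpow : (0:ℝ) < 2 ^ (k - 1) := by positivity
    nlinarith [mul_nonneg hak hpow.le]
  have hHnonneg : ∀ r, 0 < r → 0 ≤ H r := by
    intro r hr
    rw [hHformula r hr]
    have h1 : 0 ≤ E r ^ 2 / 2 := by positivity
    have h2 : 0 ≤ ∑ k ∈ Finset.Icc 2 n, (c k - a k / 2 ^ k) * E r ^ (2 * k) :=
      Finset.sum_nonneg fun k hk => mul_nonneg (hd0 k hk) (pow_nonneg (hE r hr).le _)
    linarith
  -- upper bound: H r * r^2 ≤ q * E r
  have hHle : ∀ r, 0 < r → H r * r ^ 2 ≤ q * E r := by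
    intro r hr
    have hfpos : 0 ≤ E r ^ 2 / 2 + ∑ k ∈ Finset.Icc 2 n, (a k / 2 ^ k) * E r ^ (2 * k) := by
      have h1 : 0 ≤ E r ^ 2 / 2 := by positivity
      have h2 : 0 ≤ ∑ k ∈ Finset.Icc 2 n, (a k / 2 ^ k) * E r ^ (2 * k) := by
        apply Finset.sum_nonneg
        intro k hk
        obtain ⟨hk2, hkn⟩ := Finset.mem_Icc.mp hk
        have := ha k hk2 hkn
        have := (hE r hr).le
        positivity
      linarith
    have key : H r ≤ q / r ^ 2 * E r := by
      rw [hH r hr]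
      have : (1 + ∑ k ∈ Finset.Icc 2 n, c k * E r ^ (2 * (k - 1))) * E r ^ 2
          = q / r ^ 2 * E r := by
        rw [sq (E r), ← mul_assoc, heq r hr]
      rw [this]
      linarith
    calc H r * r ^ 2 ≤ q / r ^ 2 * E r * r ^ 2 :=
          mul_le_mul_of_nonneg_right key (by positivity)
      _ = q * E r := by field_simp
  -- upper bounds for E
  have hE_le1 : ∀ r, 0 < r → E r ≤ q / r ^ 2 := by
    intro r hr
    rw [← hg_eq r hr]
    exact hid_le _ (hE r hr).le
  set m : ℕ := 2 * n - 1 with hm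
  have hm3 : 3 ≤ m := by omega
  have hmne : m ≠ 0 := by omega
  have hmR : (3:ℝ) ≤ (m:ℝ) := by exact_mod_cast hm3
  have hE_le2 : ∀ r, 0 < r → E r ≤ (q / c n) ^ ((m:ℝ)⁻¹) * r ^ (-2 * (m:ℝ)⁻¹) := by
    intro r hr
    have hEr := hE r hr
    have hsingle : c n * E r ^ m ≤ g (E r) := by
      have hmem : n ∈ Finset.Icc 2 n := Finset.mem_Icc.mpr ⟨hn, le_rfl⟩
      have h1 : c n * E r ^ (2 * n - 1) ≤ ∑ k ∈ Finset.Icc 2 n, c k * E r ^ (2 * k - 1) :=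
        Finset.single_le_sum (f := fun k => c k * E r ^ (2 * k - 1))
          (fun k hk => mul_nonneg (hc0 k hk) (pow_nonneg hEr.le _)) hmem
      simp only [hg, hm]
      linarith
    rw [hg_eq r hr] at hsingle
    have hpm : E r ^ m ≤ q / c n * r ^ (-2 : ℝ) := by
      rw [Real.rpow_neg hr.le, ← Real.rpow_natCast r 2, ← Real.rpow_neg hr.le] at *
      have : E r ^ m ≤ q / r ^ (2:ℝ) / c n := by
        rw [le_div_iff₀ hcn, mul_comm]
        exact hsingle
      calc E r ^ m ≤ q / r ^ (2:ℝ) / c n := this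
        _ = q / c n * r ^ (-2:ℝ) := by
            rw [Real.rpow_neg hr.le]
            ring
    have h1 : E r = (E r ^ m) ^ ((m:ℝ)⁻¹) := (Real.pow_rpow_inv_natCast hEr.le hmne).symm
    rw [h1]
    have h2 : ((E r) ^ m) ^ ((m:ℝ)⁻¹) ≤ (q / c n * r ^ (-2:ℝ)) ^ ((m:ℝ)⁻¹) :=
      Real.rpow_le_rpow (pow_nonneg hEr.le _) hpm (by positivity)
    calc ((E r) ^ m) ^ ((m:ℝ)⁻¹) ≤ (q / c n * r ^ (-2:ℝ)) ^ ((m:ℝ)⁻¹) := h2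
      _ = (q / c n) ^ ((m:ℝ)⁻¹) * r ^ (-2 * (m:ℝ)⁻¹) := by
          rw [Real.mul_rpow (by positivity) (by positivity), ← Real.rpow_mul hr.le]
  -- measurability
  have hmeas : AEStronglyMeasurable (fun r => H r * r ^ 2)
      (volume.restrict (Set.Ioi (0:ℝ))) := by
    have hP : Continuous fun y : ℝ =>
        y ^ 2 / 2 + ∑ k ∈ Finset.Icc 2 n, (c k - a k / 2 ^ k) * y ^ (2 * k) := by
      apply Continuous.add
      · exact (continuous_pow 2).div_const 2
      · exact continuous_finset_sum _ fun k _ => continuous_const.mul (continuous_pow _)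
    have hmsymm : Measurable (e.symm : ℝ → ℝ) := e.symm.monotone.measurable
    have hqr : Measurable fun r : ℝ => q / r ^ 2 :=
      measurable_const.div (measurable_id.pow_const 2)
    have hF : Measurable fun r : ℝ =>
        ((e.symm (q / r ^ 2)) ^ 2 / 2 + ∑ k ∈ Finset.Icc 2 n,
          (c k - a k / 2 ^ k) * (e.symm (q / r ^ 2)) ^ (2 * k)) * r ^ 2 :=
      (hP.measurable.comp (hmsymm.comp hqr)).mul (measurable_id.pow_const 2)
    apply hF.aestronglyMeasurable.congr
    rw [Filter.EventuallyEq, ae_restrict_iff' measurableSet_Ioi]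
    filter_upwards with r
    intro hr
    rw [Set.mem_Ioi] at hr
    rw [hHformula r hr, hEeq r hr]
  -- split the domain
  have hsplit : Set.Ioc (0:ℝ) 1 ∪ Set.Ioi (1:ℝ) = Set.Ioi (0:ℝ) :=
    Set.Ioc_union_Ioi_eq_Ioi zero_le_one
  rw [← hsplit]
  apply IntegrableOn.union
  · -- near 0 : dominated by q * K * r ^ (-2/m)
    set K : ℝ := (q / c n) ^ ((m:ℝ)⁻¹) with hK
    have hK0 : 0 ≤ K := by positivity
    have hint : IntegrableOn (fun r : ℝ => q * K * r ^ (-2 * (m:ℝ)⁻¹)) (Set.Ioc 0 1) := by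
      apply Integrable.const_mul
      have h := intervalIntegral.intervalIntegrable_rpow' (a := 0) (b := 1)
        (r := -2 * (m:ℝ)⁻¹) (by
          have h1 : (m:ℝ)⁻¹ ≤ 3⁻¹ := by
            apply inv_anti₀ (by norm_num) hmR
          have h2 : (0:ℝ) < (m:ℝ)⁻¹ := by positivity
          nlinarith)
      rw [intervalIntegrable_iff, Set.uIoc_of_le zero_le_one] at h
      exact h
    apply hint.mono'
      (hmeas.mono_measure (Measure.restrict_mono Set.Ioc_subset_Ioi_self le_rfl))
    rw [ae_restrict_iff' measurableSet_Ioc]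
    filter_upwards with r
    rintro ⟨hr, -⟩
    have h1 : 0 ≤ H r * r ^ 2 := mul_nonneg (hHnonneg r hr) (by positivity)
    rw [Real.norm_eq_abs, abs_of_nonneg h1]
    calc H r * r ^ 2 ≤ q * E r := hHle r hr
      _ ≤ q * (K * r ^ (-2 * (m:ℝ)⁻¹)) :=
          mul_le_mul_of_nonneg_left (hE_le2 r hr) hq.le
      _ = q * K * r ^ (-2 * (m:ℝ)⁻¹) := by ring
  · -- near ∞ : dominated by q^2 * r ^ (-2)
    have hint : IntegrableOn (fun r : ℝ => q ^ 2 * r ^ (-2:ℝ)) (Set.Ioi 1) :=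
      (integrableOn_Ioi_rpow_of_lt (by norm_num) one_pos).const_mul _
    apply hint.mono'
      (hmeas.mono_measure (Measure.restrict_mono (Set.Ioi_subset_Ioi zero_le_one) le_rfl))
    rw [ae_restrict_iff' measurableSet_Ioi]
    filter_upwards with r
    intro hr1
    rw [Set.mem_Ioi] at hr1
    have hr : (0:ℝ) < r := lt_trans one_pos hr1
    have h1 : 0 ≤ H r * r ^ 2 := mul_nonneg (hHnonneg r hr) (by positivity)
    rw [Real.norm_eq_abs, abs_of_nonneg h1]
    calc H r * r ^ 2 ≤ q * E r := hHle r hr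
      _ ≤ q * (q / r ^ 2) := mul_le_mul_of_nonneg_left (hE_le1 r hr) hq.le
      _ = q ^ 2 * r ^ (-2:ℝ) := by
          have h2 : r ^ (-2:ℝ) = (r ^ 2)⁻¹ := by
            rw [Real.rpow_neg hr.le, ← Real.rpow_natCast r 2]
            norm_num
          rw [h2]
          field_simp
end

section
/- For every β > 0 and q > 0, the total energy of the Born–Infeld electric point charge satisfies 4π ∫₀^∞ q² / (ρ² + √(ρ⁴ + β q²)) dρ = 4 π^{5/2} q^{3/2} / (3 Γ(3/4)² β^{1/4}), where Γ is the Gamma function. Equivalently, ∫₀^∞ dx/(x² + √(x⁴ + 1)) = π^{3/2} / (3 Γ(3/4)²). -/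
/-!
Since `(x² + √(x⁴ + 1))⁻¹ = √(x⁴ + 1) - x²` and `(x √(x⁴ + 1) - x³) / 3` vanishes at `0`
and at `∞` with derivative `√(x⁴ + 1) - x² - (2 / 3) / √(x⁴ + 1)`, the normalized integral
is `(2 / 3) ∫₀^∞ dx / √(x⁴ + 1)`. The substitution `t = x⁴` turns this into the Beta
integral `∫₀^∞ t^(a - 1) (1 + t)^(-(a + b)) dt = B(a, b)` at `a = b = 1 / 4`, and the
reflection formula `Γ(1/4) Γ(3/4) = π √2` gives the closed form. The general charge follows
by the scaling `ρ = (β q²)^(1/4) x`.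
-/

open Real MeasureTheory Set Filter Topology

theorem integral_rpow_mul_one_sub_rpow {a b : ℝ} (ha : 0 < a) (hb : 0 < b) :
    ∫ x in (0 : ℝ)..1, x ^ (a - 1) * (1 - x) ^ (b - 1)
      = Gamma a * Gamma b / Gamma (a + b) := by
  have h := Complex.betaIntegral_eq_Gamma_mul_div a b (by simpa) (by simpa)
  simp only [← Complex.ofReal_add, Complex.Gamma_ofReal] at h
  apply Complex.ofReal_injective
  push_cast
  rw [← h, Complex.betaIntegral, ← intervalIntegral.integral_ofReal]
  refine intervalIntegral.integral_congr fun x hx ↦ ?_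
  rw [uIcc_of_le zero_le_one] at hx
  push_cast
  rw [Complex.ofReal_cpow hx.1, Complex.ofReal_cpow (sub_nonneg.mpr hx.2)]
  push_cast
  rfl

theorem image_div_one_sub_Ioo : (fun x : ℝ ↦ x / (1 - x)) '' Ioo 0 1 = Ioi 0 := by
  ext t
  constructor
  · rintro ⟨x, ⟨hx0, hx1⟩, rfl⟩
    exact div_pos hx0 (sub_pos.mpr hx1)
  · intro (ht : 0 < t)
    refine ⟨t / (1 + t), ⟨by positivity, (div_lt_one (by positivity)).mpr (by linarith)⟩, ?_⟩
    field_simp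
    ring

theorem integral_Ioi_rpow_mul_one_add_rpow {a b : ℝ} (ha : 0 < a) (hb : 0 < b) :
    ∫ t in Ioi (0 : ℝ), t ^ (a - 1) * (1 + t) ^ (-(a + b))
      = Gamma a * Gamma b / Gamma (a + b) := by
  have hderiv : ∀ x ∈ Ioo (0 : ℝ) 1,
      HasDerivWithinAt (fun x : ℝ ↦ x / (1 - x)) ((1 - x) ^ (-2 : ℝ)) (Ioo 0 1) x := by
    intro x hx
    have h1x : 1 - x ≠ 0 := (sub_pos.mpr hx.2).ne'
    refine (((hasDerivAt_id x).div ((hasDerivAt_id x).const_sub 1) h1x).congr_deriv ?_)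
      |>.hasDerivWithinAt
    rw [rpow_neg (sub_pos.mpr hx.2).le]
    simp
  have hinj : InjOn (fun x : ℝ ↦ x / (1 - x)) (Ioo 0 1) := by
    intro x hx y hy hxy
    have := (sub_pos.mpr hx.2).ne'
    have := (sub_pos.mpr hy.2).ne'
    field_simp at hxy
    linarith
  rw [← image_div_one_sub_Ioo,
    integral_image_eq_integral_abs_deriv_smul measurableSet_Ioo hderiv hinj,
    ← integral_rpow_mul_one_sub_rpow ha hb, intervalIntegral.integral_of_le zero_le_one,
    integral_Ioc_eq_integral_Ioo]
  refine setIntegral_congr_fun measurableSet_Ioo fun x ⟨hx0, hx1⟩ ↦ ?_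
  have h1x : 0 < 1 - x := sub_pos.mpr hx1
  have hone_add : 1 + x / (1 - x) = (1 - x)⁻¹ := by field_simp; ring
  rw [smul_eq_mul, hone_add, div_rpow hx0.le h1x.le, inv_rpow h1x.le, abs_of_pos (by positivity),
    ← rpow_neg h1x.le, div_eq_mul_inv, ← rpow_neg h1x.le, neg_neg]
  calc (1 - x) ^ (-2 : ℝ) * (x ^ (a - 1) * (1 - x) ^ (-(a - 1)) * (1 - x) ^ (a + b))
      = x ^ (a - 1) * ((1 - x) ^ (-2 : ℝ) * (1 - x) ^ (-(a - 1)) * (1 - x) ^ (a + b)) := by ring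
    _ = x ^ (a - 1) * (1 - x) ^ (b - 1) := by
      rw [← rpow_add h1x, ← rpow_add h1x]; ring_nf

theorem integral_Ioi_rpow_mul_one_add_rpow_rpow {p a b : ℝ} (hp : 0 < p) (ha : 0 < a)
    (hb : 0 < b) :
    ∫ x in Ioi (0 : ℝ), x ^ (p * a - 1) * (1 + x ^ p) ^ (-(a + b))
      = Gamma a * Gamma b / (p * Gamma (a + b)) := by
  rw [div_mul_eq_div_div_swap, ← integral_Ioi_rpow_mul_one_add_rpow ha hb,
    ← integral_comp_rpow_Ioi_of_pos (g := fun t ↦ t ^ (a - 1) * (1 + t) ^ (-(a + b))) hp,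
    div_eq_inv_mul, ← integral_const_mul]
  refine setIntegral_congr_fun measurableSet_Ioi fun x (hx : 0 < x) ↦ ?_
  rw [smul_eq_mul, ← rpow_mul hx.le, mul_assoc, inv_mul_cancel_left₀ hp.ne', ← mul_assoc,
    ← rpow_add hx]
  ring_nf

theorem integral_Ioi_inv_sqrt_pow_four_add_one :
    ∫ x in Ioi (0 : ℝ), (√(x ^ 4 + 1))⁻¹ = Gamma (1 / 4) ^ 2 / (4 * √π) := by
  have h := integral_Ioi_rpow_mul_one_add_rpow_rpow (p := 4) (a := 1 / 4) (b := 1 / 4)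
    (by norm_num) (by norm_num) (by norm_num)
  rw [show (1 : ℝ) / 4 + 1 / 4 = 1 / 2 by norm_num, Gamma_one_half_eq] at h
  rw [sq, ← h]
  refine setIntegral_congr_fun measurableSet_Ioi fun x (hx : 0 < x) ↦ ?_
  rw [sqrt_eq_rpow, ← rpow_neg (by positivity), add_comm, rpow_ofNat]
  norm_num

theorem sq_le_sqrt_pow_four_add_one (x : ℝ) : x ^ 2 ≤ √(x ^ 4 + 1) :=
  le_sqrt_of_sq_le (by linarith)

theorem one_le_sqrt_pow_four_add_one (x : ℝ) : 1 ≤ √(x ^ 4 + 1) :=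
  le_sqrt_of_sq_le (by nlinarith [pow_two_nonneg (x ^ 2)])

theorem sqrt_pow_four_add_one_sub_sq (x : ℝ) :
    √(x ^ 4 + 1) - x ^ 2 = (x ^ 2 + √(x ^ 4 + 1))⁻¹ := by
  refine eq_inv_of_mul_eq_one_left ?_
  linear_combination sq_sqrt (by positivity : (0 : ℝ) ≤ x ^ 4 + 1)

theorem integrable_inv_sq_add_sqrt_pow_four_add_one :
    Integrable fun x : ℝ ↦ (x ^ 2 + √(x ^ 4 + 1))⁻¹ := by
  refine integrable_inv_one_add_sq.mono' (by fun_prop) (ae_of_all _ fun x ↦ ?_)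
  have := one_le_sqrt_pow_four_add_one x
  rw [norm_inv, norm_of_nonneg (by positivity)]
  exact inv_anti₀ (by positivity) (by linarith)

theorem integrable_inv_sqrt_pow_four_add_one :
    Integrable fun x : ℝ ↦ (√(x ^ 4 + 1))⁻¹ := by
  refine (integrable_inv_one_add_sq.const_mul 2).mono' (by fun_prop) (ae_of_all _ fun x ↦ ?_)
  have := one_le_sqrt_pow_four_add_one x
  have := sq_le_sqrt_pow_four_add_one x
  rw [norm_inv, norm_of_nonneg (by positivity), ← div_eq_mul_inv, ← inv_div]
  exact inv_anti₀ (by positivity) (by linarith)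

theorem hasDerivAt_mul_sqrt_pow_four_add_one_sub_pow_three (x : ℝ) :
    HasDerivAt (fun x : ℝ ↦ (x * √(x ^ 4 + 1) - x ^ 3) / 3)
      ((x ^ 2 + √(x ^ 4 + 1))⁻¹ - 2 / 3 * (√(x ^ 4 + 1))⁻¹) x := by
  have hpos : 0 < x ^ 4 + 1 := by positivity
  have hsqrt := ((hasDerivAt_pow 4 x).add_const 1).sqrt hpos.ne'
  refine ((((hasDerivAt_id' x).mul hsqrt).sub (hasDerivAt_pow 3 x)).div_const 3).congr_deriv ?_
  have := one_le_sqrt_pow_four_add_one x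
  rw [← sqrt_pow_four_add_one_sub_sq]
  field_simp
  linear_combination (-4 : ℝ) * sq_sqrt hpos.le

theorem tendsto_mul_inv_sq_add_sqrt_pow_four_add_one_atTop :
    Tendsto (fun x : ℝ ↦ x * (x ^ 2 + √(x ^ 4 + 1))⁻¹) atTop (𝓝 0) := by
  refine squeeze_zero' ?_ ?_ tendsto_inv_atTop_zero
  · filter_upwards [eventually_ge_atTop 0] with x hx
    have := one_le_sqrt_pow_four_add_one x
    positivity
  · filter_upwards [eventually_gt_atTop 0] with x hx
    have := one_le_sqrt_pow_four_add_one x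
    rw [← div_eq_mul_inv, div_le_iff₀ (by positivity)]
    field_simp
    nlinarith

theorem integral_Ioi_inv_sq_add_sqrt_pow_four_add_one_eq_two_div_three_mul :
    ∫ x in Ioi (0 : ℝ), (x ^ 2 + √(x ^ 4 + 1))⁻¹
      = 2 / 3 * ∫ x in Ioi (0 : ℝ), (√(x ^ 4 + 1))⁻¹ := by
  have hlim : Tendsto (fun x : ℝ ↦ (x * √(x ^ 4 + 1) - x ^ 3) / 3) atTop (𝓝 0) := by
    simpa [← sqrt_pow_four_add_one_sub_sq, mul_sub, ← pow_succ'] using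
      tendsto_mul_inv_sq_add_sqrt_pow_four_add_one_atTop.div_const 3
  have hint₁ := integrable_inv_sq_add_sqrt_pow_four_add_one.integrableOn (s := Ioi 0)
  have hint₂ := (integrable_inv_sqrt_pow_four_add_one.const_mul (2 / 3)).integrableOn (s := Ioi 0)
  have := integral_Ioi_of_hasDerivAt_of_tendsto' (a := 0)
    (fun x _ ↦ hasDerivAt_mul_sqrt_pow_four_add_one_sub_pow_three x) (hint₁.sub hint₂) hlim
  rw [integral_sub hint₁ hint₂, integral_const_mul] at this
  simpa [sub_eq_zero] using this

theorem Gamma_one_div_four_mul_Gamma_three_div_four :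
    Gamma (1 / 4) * Gamma (3 / 4) = √2 * π := by
  have h := Gamma_mul_Gamma_one_sub (1 / 4)
  rw [show (1 : ℝ) - 1 / 4 = 3 / 4 by norm_num, mul_one_div, sin_pi_div_four] at h
  rw [h]
  field_simp
  exact (sq_sqrt zero_le_two).symm

theorem integral_Ioi_inv_sq_add_sqrt_pow_four_add_one :
    ∫ x in Ioi (0 : ℝ), (x ^ 2 + √(x ^ 4 + 1))⁻¹
      = π ^ (3 / 2 : ℝ) / (3 * Gamma (3 / 4) ^ 2) := by
  have hΓ : Gamma (1 / 4) = √2 * π / Gamma (3 / 4) := by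
    rw [← Gamma_one_div_four_mul_Gamma_three_div_four, mul_div_cancel_right₀]
    exact (Gamma_pos_of_pos (by norm_num)).ne'
  have hπ : π ^ (3 / 2 : ℝ) = π * √π := by
    rw [show (3 / 2 : ℝ) = 1 + 1 / 2 by norm_num, rpow_add pi_pos, rpow_one, sqrt_eq_rpow]
  rw [integral_Ioi_inv_sq_add_sqrt_pow_four_add_one_eq_two_div_three_mul,
    integral_Ioi_inv_sqrt_pow_four_add_one, hΓ, hπ, div_pow, mul_pow, sq_sqrt zero_le_two]
  field_simp
  linear_combination (-4 : ℝ) * sq_sqrt pi_pos.le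

theorem integral_Ioi_div_sq_add_sqrt_pow_four_add_pow_four (a : ℝ) {c : ℝ} (hc : 0 < c) :
    ∫ ρ in Ioi (0 : ℝ), a / (ρ ^ 2 + √(ρ ^ 4 + c ^ 4))
      = a / c * ∫ x in Ioi (0 : ℝ), (x ^ 2 + √(x ^ 4 + 1))⁻¹ := by
  have h := integral_comp_mul_left_Ioi' (fun ρ ↦ a / (ρ ^ 2 + √(ρ ^ 4 + c ^ 4))) 0 hc
  rw [mul_zero] at h
  rw [← h, smul_eq_mul, ← integral_const_mul, ← integral_const_mul]
  refine setIntegral_congr_fun measurableSet_Ioi fun x _ ↦ ?_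
  have hsqrt : √((c * x) ^ 4 + c ^ 4) = c ^ 2 * √(x ^ 4 + 1) := by
    rw [show (c * x) ^ 4 + c ^ 4 = (c ^ 2) ^ 2 * (x ^ 4 + 1) by ring,
      sqrt_mul (by positivity), sqrt_sq (by positivity)]
  have := one_le_sqrt_pow_four_add_one x
  rw [hsqrt]
  field_simp

/-- The total energy of the Born–Infeld electric point charge:
`4π ∫₀^∞ q²/(ρ² + √(ρ⁴ + βq²)) dρ = 4π^{5/2} q^{3/2}/(3Γ(3/4)² β^{1/4})`; equivalently
`∫₀^∞ dx/(x² + √(x⁴+1)) = π^{3/2}/(3Γ(3/4)²)`. -/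
theorem stmt6 (β q : ℝ) (hβ : 0 < β) (hq : 0 < q) :
    4 * Real.pi * ∫ ρ in Set.Ioi (0 : ℝ), q ^ 2 / (ρ ^ 2 + Real.sqrt (ρ ^ 4 + β * q ^ 2))
      = 4 * Real.pi ^ ((5 : ℝ) / 2) * q ^ ((3 : ℝ) / 2)
        / (3 * (Real.Gamma (3 / 4)) ^ 2 * β ^ ((1 : ℝ) / 4)) ∧
    ∫ x in Set.Ioi (0 : ℝ), 1 / (x ^ 2 + Real.sqrt (x ^ 4 + 1))
      = Real.pi ^ ((3 : ℝ) / 2) / (3 * (Real.Gamma (3 / 4)) ^ 2) := by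
  simp only [one_div, integral_Ioi_inv_sq_add_sqrt_pow_four_add_one, and_true]
  have hc4 : β * q ^ 2 = (β ^ (1 / 4 : ℝ) * q ^ (1 / 2 : ℝ)) ^ 4 := by
    rw [mul_pow, ← rpow_mul_natCast hβ.le, ← rpow_mul_natCast hq.le]
    norm_num
  have hq2 : q ^ 2 = q ^ (1 / 2 : ℝ) * q ^ (3 / 2 : ℝ) := by
    rw [← rpow_add hq, ← rpow_natCast]; norm_num
  have hπ : π ^ (5 / 2 : ℝ) = π * π ^ (3 / 2 : ℝ) := by
    rw [← rpow_one_add' pi_pos.le] <;> norm_num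
  rw [hc4, integral_Ioi_div_sq_add_sqrt_pow_four_add_pow_four _ (by positivity),
    integral_Ioi_inv_sq_add_sqrt_pow_four_add_one, hq2, hπ]
  field_simp
end

section
/- Let G > 0, E₀ > 0, and κ ≥ 0 be real numbers, and define the metric factor A(r) = 1 − 2 G E₀ r^{κ−1} for r > 0. Then the Kretschmann scalar K(r) = ((r² A''(r))² + 4 (r A'(r))² + 4 (A(r) − 1)²) / r⁴ satisfies, for every r > 0, K(r) = 4 G² E₀² ((κ−1)²(κ−2)² + 4(κ−1)² + 4) r^{2κ−6}. In particular, if κ ≥ 3 then K is bounded near r = 0, so the curvature singularity at the center is removed. -/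
/-- Critical case of the curvature singularity relegation theorem: with metric factor
`A(r) = 1 − 2GE₀ r^{κ−1}`, the Kretschmann scalar is exactly
`K(r) = 4G²E₀²((κ−1)²(κ−2)² + 4(κ−1)² + 4) r^{2κ−6}`; in particular `K` is bounded near
`r = 0` when `κ ≥ 3`. -/
theorem stmt8 (G E₀ κ : ℝ) (hG : 0 < G) (hE : 0 < E₀) (hκ : 0 ≤ κ)
    (A : ℝ → ℝ) (hA : ∀ r : ℝ, 0 < r → A r = 1 - 2 * G * E₀ * r ^ (κ - 1))
    (K : ℝ → ℝ)
    (hK : ∀ r : ℝ, 0 < r → K r =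
      ((r ^ 2 * deriv (deriv A) r) ^ 2 + 4 * (r * deriv A r) ^ 2 + 4 * (A r - 1) ^ 2) / r ^ 4) :
    (∀ r : ℝ, 0 < r →
      K r = 4 * G ^ 2 * E₀ ^ 2 * ((κ - 1) ^ 2 * (κ - 2) ^ 2 + 4 * (κ - 1) ^ 2 + 4)
        * r ^ (2 * κ - 6)) ∧
    (3 ≤ κ → ∃ C : ℝ, ∀ r ∈ Set.Ioo (0 : ℝ) 1, |K r| ≤ C) := by
  set c : ℝ := 2 * G * E₀ with hc
  have hd1 : ∀ r : ℝ, 0 < r → deriv A r = -(c * (κ - 1)) * r ^ (κ - 2) := by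
    intro r hr
    have heq : A =ᶠ[nhds r] fun x => 1 - c * x ^ (κ - 1) :=
      Filter.eventuallyEq_of_mem (isOpen_Ioi.mem_nhds hr) fun x hx => hA x hx
    rw [heq.deriv_eq]
    have h : HasDerivAt (fun x : ℝ => 1 - c * x ^ (κ - 1))
        (0 - c * ((κ - 1) * r ^ (κ - 1 - 1))) r :=
      (hasDerivAt_const r (1 : ℝ)).sub
        ((Real.hasDerivAt_rpow_const (Or.inl hr.ne')).const_mul c)
    rw [h.deriv]
    ring_nf
  have hd2 : ∀ r : ℝ, 0 < r → deriv (deriv A) r = -(c * (κ - 1)) * ((κ - 2) * r ^ (κ - 3)) := by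
    intro r hr
    have heq : deriv A =ᶠ[nhds r] fun x => -(c * (κ - 1)) * x ^ (κ - 2) :=
      Filter.eventuallyEq_of_mem (isOpen_Ioi.mem_nhds hr) fun x hx => hd1 x hx
    rw [heq.deriv_eq]
    have h : HasDerivAt (fun x : ℝ => -(c * (κ - 1)) * x ^ (κ - 2))
        (-(c * (κ - 1)) * ((κ - 2) * r ^ (κ - 2 - 1))) r :=
      (Real.hasDerivAt_rpow_const (Or.inl hr.ne')).const_mul _
    rw [h.deriv, show κ - 2 - 1 = κ - 3 from by ring]
  have key : ∀ r : ℝ, 0 < r →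
      K r = 4 * G ^ 2 * E₀ ^ 2 * ((κ - 1) ^ 2 * (κ - 2) ^ 2 + 4 * (κ - 1) ^ 2 + 4)
        * r ^ (2 * κ - 6) := by
    intro r hr
    rw [hK r hr, hA r hr, hd1 r hr, hd2 r hr]
    have h1 : r ^ 2 * r ^ (κ - 3) = r ^ (κ - 1) := by
      rw [← Real.rpow_two, ← Real.rpow_add hr]; ring_nf
    have h2 : r * r ^ (κ - 2) = r ^ (κ - 1) := by
      nth_rewrite 1 [← Real.rpow_one r]
      rw [← Real.rpow_add hr]; ring_nf
    have h3 : (r ^ (κ - 1)) ^ 2 = r ^ (2 * κ - 2) := by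
      rw [← Real.rpow_natCast (r ^ (κ - 1)) 2, ← Real.rpow_mul hr.le]
      congr 1; push_cast; ring
    have h4 : r ^ (2 * κ - 2) / r ^ (4 : ℕ) = r ^ (2 * κ - 6) := by
      rw [← Real.rpow_natCast r 4, ← Real.rpow_sub hr]
      congr 1; push_cast; ring
    have expand : ((r ^ 2 * (-(c * (κ - 1)) * ((κ - 2) * r ^ (κ - 3)))) ^ 2
        + 4 * (r * (-(c * (κ - 1)) * r ^ (κ - 2))) ^ 2
        + 4 * (1 - c * r ^ (κ - 1) - 1) ^ 2)
        = c ^ 2 * ((κ - 1) ^ 2 * (κ - 2) ^ 2 + 4 * (κ - 1) ^ 2 + 4) * r ^ (2 * κ - 2) := by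
      have e1 : r ^ 2 * (-(c * (κ - 1)) * ((κ - 2) * r ^ (κ - 3)))
          = -(c * (κ - 1)) * (κ - 2) * r ^ (κ - 1) := by
        rw [← h1]; ring
      rw [e1]
      rw [show r * (-(c * (κ - 1)) * r ^ (κ - 2)) = -(c * (κ - 1)) * (r * r ^ (κ - 2)) by ring,
        h2]
      rw [show (1 - c * r ^ (κ - 1) - 1) = -(c * r ^ (κ-1)) by ring]
      have : ∀ a : ℝ, (a * r ^ (κ-1)) ^ 2 = a ^ 2 * r ^ (2*κ-2) := by
        intro a; rw [mul_pow, h3]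
      rw [show (-(c * (κ - 1)) * (κ - 2) * r ^ (κ - 1)) ^ 2
          = ((-(c * (κ - 1)) * (κ - 2)) * r ^ (κ - 1)) ^ 2 by ring, this,
        show (-(c * (κ - 1)) * r ^ (κ - 1)) ^ 2 = ((-(c * (κ - 1))) * r ^ (κ - 1)) ^ 2 by ring,
        this, show (-(c * r ^ (κ - 1))) ^ 2 = ((-c) * r ^ (κ - 1)) ^ 2 by ring, this]
      ring
    rw [expand, hc]
    rw [mul_div_assoc, h4]
    ring
  refine ⟨key, fun h3 => ?_⟩
  refine ⟨4 * G ^ 2 * E₀ ^ 2 * ((κ - 1) ^ 2 * (κ - 2) ^ 2 + 4 * (κ - 1) ^ 2 + 4), ?_⟩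
  intro r ⟨hr0, hr1⟩
  rw [key r hr0, abs_mul]
  have hcoef : 0 ≤ 4 * G ^ 2 * E₀ ^ 2 * ((κ - 1) ^ 2 * (κ - 2) ^ 2 + 4 * (κ - 1) ^ 2 + 4) := by
    positivity
  rw [abs_of_nonneg hcoef]
  have hpow : |r ^ (2 * κ - 6)| ≤ 1 := by
    rw [abs_of_nonneg (Real.rpow_nonneg hr0.le _)]
    exact Real.rpow_le_one hr0.le hr1.le (by linarith)
  calc _ ≤ 4 * G ^ 2 * E₀ ^ 2 * ((κ - 1) ^ 2 * (κ - 2) ^ 2 + 4 * (κ - 1) ^ 2 + 4) * 1 :=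
        mul_le_mul_of_nonneg_left hpow hcoef
    _ = _ := mul_one _
end

section
/- Let G > 0, m ≠ 0, E₀ ∈ ℝ, and κ > 0 be real numbers, and define the metric factor A(r) = 1 − 2 G m / r − 2 G E₀ r^{κ−1} for r > 0. Then the Kretschmann scalar K(r) = ((r² A''(r))² + 4 (r A'(r))² + 4 (A(r) − 1)²) / r⁴ satisfies lim_{r→0⁺} r⁶ K(r) = 48 G² m². -/
/-!
Write `A = 1 + α r⁻¹ + β r^(κ-1)` with `α = -2Gm`. The Euler operator `r d/dr` acts diagonally on
powers, so `A - 1`, `r A'` and `r² A''` are each a combination of `r⁻¹` and `r^(κ-1)`; after one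
more factor `r` they become `c α + O(r^κ)` with `c = 1, -1, 2`. Since
`r⁶ K = (r · r² A'')² + 4 (r · r A')² + 4 (r (A - 1))²`, the limit is `(4 + 4 + 4) α² = 48 G² m²`.
-/

open Topology Filter

noncomputable def kretschmann (A : ℝ → ℝ) (r : ℝ) : ℝ :=
  ((r ^ 2 * deriv (deriv A) r) ^ 2 + 4 * (r * deriv A r) ^ 2 + 4 * (A r - 1) ^ 2) / r ^ 4

theorem sixth_pow_mul_kretschmann (A : ℝ → ℝ) {r : ℝ} (hr : r ≠ 0) :
    r ^ 6 * kretschmann A r =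
      (r * (r ^ 2 * deriv (deriv A) r)) ^ 2 + 4 * (r * (r * deriv A r)) ^ 2
        + 4 * (r * (A r - 1)) ^ 2 := by
  rw [kretschmann]
  field_simp

section TwoPowers

variable {A : ℝ → ℝ} {c α β p q r : ℝ}

theorem hasDerivAt_const_add_two_rpow (c α β p q : ℝ) (hr : 0 < r) :
    HasDerivAt (fun x => c + α * x ^ p + β * x ^ q)
      (α * p * r ^ (p - 1) + β * q * r ^ (q - 1)) r := by
  have hp := (Real.hasDerivAt_rpow_const (p := p) (Or.inl hr.ne')).const_mul α
  have hq := (Real.hasDerivAt_rpow_const (p := q) (Or.inl hr.ne')).const_mul β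
  exact (((hasDerivAt_const r c).add hp).add hq).congr_deriv (by ring)

theorem deriv_eq_of_eq_const_add_two_rpow (hA : ∀ x, 0 < x → A x = c + α * x ^ p + β * x ^ q)
    (hr : 0 < r) : deriv A r = α * p * r ^ (p - 1) + β * q * r ^ (q - 1) := by
  refine ((hasDerivAt_const_add_two_rpow c α β p q hr).congr_of_eventuallyEq ?_).deriv
  filter_upwards [Ioi_mem_nhds hr] with x hx using hA x hx

theorem deriv_deriv_eq_of_eq_const_add_two_rpow
    (hA : ∀ x, 0 < x → A x = c + α * x ^ p + β * x ^ q) (hr : 0 < r) :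
    deriv (deriv A) r = α * p * (p - 1) * r ^ (p - 2) + β * q * (q - 1) * r ^ (q - 2) := by
  have hA' (x : ℝ) (hx : 0 < x) :
      deriv A x = 0 + α * p * x ^ (p - 1) + β * q * x ^ (q - 1) := by
    rw [zero_add, deriv_eq_of_eq_const_add_two_rpow hA hx]
  rw [deriv_eq_of_eq_const_add_two_rpow hA' hr, sub_sub, sub_sub, one_add_one_eq_two]

theorem mul_deriv_eq_of_eq_const_add_two_rpow
    (hA : ∀ x, 0 < x → A x = c + α * x ^ p + β * x ^ q) (hr : 0 < r) :
    r * deriv A r = α * p * r ^ p + β * q * r ^ q := by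
  rw [deriv_eq_of_eq_const_add_two_rpow hA hr, Real.rpow_sub_one hr.ne', Real.rpow_sub_one hr.ne']
  field_simp

theorem sq_mul_deriv_deriv_eq_of_eq_const_add_two_rpow
    (hA : ∀ x, 0 < x → A x = c + α * x ^ p + β * x ^ q) (hr : 0 < r) :
    r ^ 2 * deriv (deriv A) r = α * p * (p - 1) * r ^ p + β * q * (q - 1) * r ^ q := by
  rw [deriv_deriv_eq_of_eq_const_add_two_rpow hA hr, Real.rpow_sub hr, Real.rpow_sub hr,
    Real.rpow_two]
  field_simp

end TwoPowers

theorem tendsto_mul_inv_add_rpow_sub_one {κ : ℝ} (hκ : 0 < κ) (a b : ℝ) :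
    Tendsto (fun r : ℝ => r * (a * r ^ (-1 : ℝ) + b * r ^ (κ - 1))) (𝓝[>] 0) (𝓝 a) := by
  have hκ0 : Tendsto (fun r : ℝ => r ^ κ) (𝓝[>] 0) (𝓝 0) :=
    ((Real.continuous_rpow_const hκ.le).tendsto' 0 0 (Real.zero_rpow hκ.ne')).mono_left
      nhdsWithin_le_nhds
  have hlim : Tendsto (fun r : ℝ => a + b * r ^ κ) (𝓝[>] 0) (𝓝 a) := by
    simpa using (hκ0.const_mul b).const_add a
  refine hlim.congr' ?_
  filter_upwards [self_mem_nhdsWithin] with r (hr : 0 < r)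
  rw [Real.rpow_neg_one, Real.rpow_sub_one hr.ne']
  field_simp

theorem tendsto_sixth_pow_mul_kretschmann {A : ℝ → ℝ} {α β κ : ℝ} (hκ : 0 < κ)
    (hA : ∀ x, 0 < x → A x = 1 + α * x ^ (-1 : ℝ) + β * x ^ (κ - 1)) :
    Tendsto (fun r => r ^ 6 * kretschmann A r) (𝓝[>] 0) (𝓝 (12 * α ^ 2)) := by
  have h2 := tendsto_mul_inv_add_rpow_sub_one hκ (α * -1 * (-1 - 1)) (β * (κ - 1) * (κ - 1 - 1))
  have h1 := tendsto_mul_inv_add_rpow_sub_one hκ (α * -1) (β * (κ - 1))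
  have h0 := tendsto_mul_inv_add_rpow_sub_one hκ α β
  have hlim := ((h2.pow 2).add ((h1.pow 2).const_mul 4)).add ((h0.pow 2).const_mul 4)
  rw [show (α * -1 * (-1 - 1)) ^ 2 + 4 * (α * -1) ^ 2 + 4 * α ^ 2 = 12 * α ^ 2 by ring] at hlim
  refine hlim.congr' ?_
  filter_upwards [self_mem_nhdsWithin] with r (hr : 0 < r)
  rw [sixth_pow_mul_kretschmann A hr.ne', sq_mul_deriv_deriv_eq_of_eq_const_add_two_rpow hA hr,
    mul_deriv_eq_of_eq_const_add_two_rpow hA hr, hA r hr]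
  ring

theorem stmt9_general (G m E₀ κ : ℝ) (hκ : 0 < κ)
    (A : ℝ → ℝ) (hA : ∀ r : ℝ, 0 < r → A r = 1 - 2 * G * m / r - 2 * G * E₀ * r ^ (κ - 1))
    (K : ℝ → ℝ)
    (hK : ∀ r : ℝ, 0 < r → K r =
      ((r ^ 2 * deriv (deriv A) r) ^ 2 + 4 * (r * deriv A r) ^ 2 + 4 * (A r - 1) ^ 2) / r ^ 4) :
    Tendsto (fun r => r ^ 6 * K r) (𝓝[>] (0 : ℝ)) (𝓝 (48 * G ^ 2 * m ^ 2)) := by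
  have hA' (r : ℝ) (hr : 0 < r) :
      A r = 1 + -(2 * G * m) * r ^ (-1 : ℝ) + -(2 * G * E₀) * r ^ (κ - 1) := by
    rw [hA r hr, Real.rpow_neg_one]
    ring
  have hlim := tendsto_sixth_pow_mul_kretschmann hκ hA'
  rw [show 12 * (-(2 * G * m)) ^ 2 = 48 * G ^ 2 * m ^ 2 by ring] at hlim
  refine hlim.congr' ?_
  filter_upwards [self_mem_nhdsWithin] with r (hr : 0 < r)
  rw [hK r hr, kretschmann]

/-- Noncritical case of the curvature singularity relegation theorem: with metric factor
`A(r) = 1 − 2Gm/r − 2GE₀ r^{κ−1}` (`m = M − E ≠ 0`), the Kretschmann scalar satisfies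
`r⁶ K(r) → 48 G² m²` as `r → 0⁺`: the Schwarzschild-type singularity. -/
theorem stmt9 (G m E₀ κ : ℝ) (hG : 0 < G) (hm : m ≠ 0) (hκ : 0 < κ)
    (A : ℝ → ℝ) (hA : ∀ r : ℝ, 0 < r → A r = 1 - 2 * G * m / r - 2 * G * E₀ * r ^ (κ - 1))
    (K : ℝ → ℝ)
    (hK : ∀ r : ℝ, 0 < r → K r =
      ((r ^ 2 * deriv (deriv A) r) ^ 2 + 4 * (r * deriv A r) ^ 2 + 4 * (A r - 1) ^ 2) / r ^ 4) :
    Tendsto (fun r => r ^ 6 * K r) (𝓝[>] (0 : ℝ)) (𝓝 (48 * G ^ 2 * m ^ 2)) :=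
  stmt9_general G m E₀ κ hκ A hA K hK
end

section
/- Let w : (0,∞) → ℝ be continuous and nowhere zero, and define f(X) = exp(∫₁^X (1 + 1/w(t)) / (2t) dt) for X > 0. Then f is positive and differentiable on (0,∞), it satisfies the equation-of-state ODE 2 X f'(X) = (1 + 1/w(X)) f(X) for all X > 0, and moreover 2 X f'(X) − f(X) ≠ 0 and f(X) / (2 X f'(X) − f(X)) = w(X) for all X > 0. -/
/-- Realization of an arbitrary equation of state by k-essence: for any continuous,
nowhere vanishing `w` on `(0,∞)`, the function
`f(X) = exp(∫₁^X (1 + 1/w(t))/(2t) dt)` is positive, differentiable, satisfies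
`2X f'(X) = (1 + 1/w(X)) f(X)`, and realizes `f(X)/(2X f'(X) − f(X)) = w(X)`. -/
theorem stmt13 (w : ℝ → ℝ) (hw : ContinuousOn w (Set.Ioi (0 : ℝ)))
    (hw0 : ∀ t : ℝ, 0 < t → w t ≠ 0)
    (f : ℝ → ℝ)
    (hf : ∀ X : ℝ, 0 < X →
      f X = Real.exp (∫ t in (1 : ℝ)..X, (1 + 1 / w t) / (2 * t))) :
    ∀ X : ℝ, 0 < X →
      0 < f X ∧ DifferentiableAt ℝ f X ∧
      2 * X * deriv f X = (1 + 1 / w X) * f X ∧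
      2 * X * deriv f X - f X ≠ 0 ∧
      f X / (2 * X * deriv f X - f X) = w X := by
  set h : ℝ → ℝ := fun t => (1 + 1 / w t) / (2 * t) with hh
  set g : ℝ → ℝ := fun X => Real.exp (∫ t in (1 : ℝ)..X, h t) with hg
  have hcont : ContinuousOn h (Set.Ioi (0 : ℝ)) := by
    apply ContinuousOn.div
    · exact continuousOn_const.add (continuousOn_const.div hw hw0)
    · exact (continuous_const.mul continuous_id).continuousOn
    · intro t ht
      have : (0 : ℝ) < t := ht
      positivity
  intro X hX
  have hXmem : X ∈ Set.Ioi (0 : ℝ) := hX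
  have hsub : Set.uIcc (1 : ℝ) X ⊆ Set.Ioi 0 := by
    intro t ht
    have h1 : min 1 X ≤ t := ht.1
    have : (0 : ℝ) < min 1 X := lt_min one_pos hX
    exact lt_of_lt_of_le this h1
  have hint : IntervalIntegrable h MeasureTheory.volume 1 X :=
    (hcont.mono hsub).intervalIntegrable
  have hmeas : StronglyMeasurableAtFilter h (nhds X) MeasureTheory.volume :=
    hcont.stronglyMeasurableAtFilter isOpen_Ioi X hXmem
  have hca : ContinuousAt h X := hcont.continuousAt (isOpen_Ioi.mem_nhds hXmem)
  have hF : HasDerivAt (fun Y => ∫ t in (1 : ℝ)..Y, h t) (h X) X :=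
    intervalIntegral.integral_hasDerivAt_right hint hmeas hca
  have hgd : HasDerivAt g (h X * g X) X := by
    simpa [hg, mul_comm] using hF.exp
  have heq : f =ᶠ[nhds X] g := by
    filter_upwards [isOpen_Ioi.mem_nhds hXmem] with Y hY
    exact hf Y hY
  have hfd : HasDerivAt f (h X * g X) X := hgd.congr_of_eventuallyEq heq
  have hfg : f X = g X := hf X hX
  have hfpos : 0 < f X := by rw [hfg]; exact Real.exp_pos _
  have hderiv : deriv f X = h X * g X := hfd.deriv
  have hwX : w X ≠ 0 := hw0 X hX
  have hXne : X ≠ 0 := ne_of_gt hX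
  have hode : 2 * X * deriv f X = (1 + 1 / w X) * f X := by
    rw [hderiv, ← hfg, hh]
    field_simp
  have hdiff : 2 * X * deriv f X - f X = f X / w X := by
    rw [hode]; field_simp; ring
  have hne : 2 * X * deriv f X - f X ≠ 0 := by
    rw [hdiff]
    exact div_ne_zero (ne_of_gt hfpos) hwX
  refine ⟨hfpos, hfd.differentiableAt, hode, hne, ?_⟩
  rw [hdiff]
  field_simp
end

section
/- Let k ≥ 2 be an integer, a_2, …, a_{k−1} ≥ 0, a_k > 0, and let f(X) = X + Σ_{i=2}^k a_i X^i. For X > 0 define w(X) = f(X) / (2 X f'(X) − f(X)) = (X + Σ_{i=2}^k a_i X^i) / (X + Σ_{i=2}^k (2i−1) a_i X^i), which is well defined since the denominator is positive. Then lim_{X→0⁺} w(X) = 1 and lim_{X→∞} w(X) = 1/(2k−1). Consequently, lim_{X→∞} w(X) = 1/n for a positive integer n if and only if n = 2k − 1 is odd. -/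
open Topology Filter

private lemma div_div_cancel_aux (A B c : ℝ) (hc : c ≠ 0) : (A/c)/(B/c) = A/B := by
  rcases eq_or_ne B 0 with h|h
  · simp [h]
  · field_simp

private lemma tendsto_atTop_aux (k : ℕ) (hk : 2 ≤ k) (c : ℕ → ℝ) :
    Tendsto (fun X : ℝ => (X + ∑ i ∈ Finset.Icc 2 k, c i * X ^ i) / X ^ k)
      atTop (𝓝 (c k)) := by
  have h0 : Tendsto (fun X : ℝ => X / X ^ k) atTop (𝓝 0) := by
    have := tendsto_pow_div_pow_atTop_zero (𝕜 := ℝ) (by omega : 1 < k)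
    simpa using this
  have hsum : Tendsto (fun X : ℝ => ∑ i ∈ Finset.Icc 2 k, c i * X ^ i / X ^ k)
      atTop (𝓝 (∑ i ∈ Finset.Icc 2 k, if i = k then c i else 0)) := by
    refine tendsto_finset_sum _ (fun i hi => ?_)
    simp only [Finset.mem_Icc] at hi
    rcases eq_or_ne i k with h|h
    · subst h
      simp only [if_pos rfl]
      have heq : (fun _ : ℝ => c i) =ᶠ[atTop] (fun X : ℝ => c i * X ^ i / X ^ i) := by
        filter_upwards [eventually_gt_atTop (0:ℝ)] with X hX
        rw [mul_div_assoc, div_self (by positivity), mul_one]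
      exact Tendsto.congr' heq tendsto_const_nhds
    · simp only [if_neg h]
      have h1 : Tendsto (fun X : ℝ => X ^ i / X ^ k) atTop (𝓝 0) :=
        tendsto_pow_div_pow_atTop_zero (by omega)
      have h2 := h1.const_mul (c i)
      simpa [mul_div_assoc] using h2
  have hval : (∑ i ∈ Finset.Icc 2 k, if i = k then c i else 0) = c k := by
    rw [Finset.sum_ite_eq' (Finset.Icc 2 k) k c]
    simp [Finset.mem_Icc, hk]
  rw [hval] at hsum
  have hadd := h0.add hsum
  rw [zero_add] at hadd
  have heq : ∀ X : ℝ, X / X ^ k + ∑ i ∈ Finset.Icc 2 k, c i * X ^ i / X ^ k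
      = (X + ∑ i ∈ Finset.Icc 2 k, c i * X ^ i) / X ^ k := by
    intro X
    rw [add_div, Finset.sum_div]
  exact hadd.congr heq

private lemma tendsto_zero_aux (k : ℕ) (hk : 2 ≤ k) (c : ℕ → ℝ) :
    Tendsto (fun X : ℝ => (X + ∑ i ∈ Finset.Icc 2 k, c i * X ^ i) / X)
      (𝓝[>] (0 : ℝ)) (𝓝 1) := by
  have hcont : Tendsto (fun X : ℝ => 1 + ∑ i ∈ Finset.Icc 2 k, c i * X ^ (i - 1))
      (𝓝 (0 : ℝ)) (𝓝 1) := by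
    have hc : Continuous (fun X : ℝ => 1 + ∑ i ∈ Finset.Icc 2 k, c i * X ^ (i - 1)) := by
      continuity
    have := hc.tendsto 0
    convert this using 2
    rw [eq_comm]
    have : (∑ i ∈ Finset.Icc 2 k, c i * (0:ℝ) ^ (i - 1)) = 0 := by
      refine Finset.sum_eq_zero (fun i hi => ?_)
      simp only [Finset.mem_Icc] at hi
      rw [zero_pow (by omega : i - 1 ≠ 0), mul_zero]
    rw [this, add_zero]
  refine (hcont.mono_left nhdsWithin_le_nhds).congr' ?_
  filter_upwards [self_mem_nhdsWithin] with X hX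
  have hX0 : X ≠ 0 := ne_of_gt hX
  rw [add_div, div_self hX0, Finset.sum_div]
  congr 1
  refine Finset.sum_congr rfl (fun i hi => ?_)
  simp only [Finset.mem_Icc] at hi
  rw [mul_div_assoc]
  congr 1
  rw [eq_div_iff hX0, ← pow_succ]
  congr 1
  omega

/-- Dimension selection for the polynomial k-essence model: the equation-of-state
parameter `w(X) = f(X)/(2X f'(X) − f(X))` of `f(X) = X + Σ_{i=2}^k a_i X^i` is well
defined, tends to `1` as `X → 0⁺` (stiff matter) and to `1/(2k−1)` as `X → ∞`;
consequently `lim_{X→∞} w(X) = 1/n` for a positive integer `n` iff `n = 2k − 1`. -/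
theorem stmt15 (k : ℕ) (hk : 2 ≤ k) (a : ℕ → ℝ)
    (ha : ∀ i, 2 ≤ i → i ≤ k - 1 → 0 ≤ a i) (hak : 0 < a k)
    (w : ℝ → ℝ)
    (hw : ∀ X : ℝ, 0 < X → w X =
      (X + ∑ i ∈ Finset.Icc 2 k, a i * X ^ i) /
        (X + ∑ i ∈ Finset.Icc 2 k, (2 * (i : ℝ) - 1) * a i * X ^ i)) :
    (∀ X : ℝ, 0 < X → 0 < X + ∑ i ∈ Finset.Icc 2 k, (2 * (i : ℝ) - 1) * a i * X ^ i) ∧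
    Tendsto w (𝓝[>] (0 : ℝ)) (𝓝 1) ∧
    Tendsto w atTop (𝓝 (1 / (2 * (k : ℝ) - 1))) ∧
    (∀ n : ℕ, 0 < n → (Tendsto w atTop (𝓝 (1 / (n : ℝ))) ↔ n = 2 * k - 1)) := by
  have hanonneg : ∀ i ∈ Finset.Icc 2 k, 0 ≤ a i := by
    intro i hi
    simp only [Finset.mem_Icc] at hi
    rcases eq_or_ne i k with h|h
    · exact h ▸ hak.le
    · exact ha i hi.1 (by omega)
  have hpos : ∀ X : ℝ, 0 < X →
      0 < X + ∑ i ∈ Finset.Icc 2 k, (2 * (i : ℝ) - 1) * a i * X ^ i := by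
    intro X hX
    have : 0 ≤ ∑ i ∈ Finset.Icc 2 k, (2 * (i : ℝ) - 1) * a i * X ^ i := by
      refine Finset.sum_nonneg (fun i hi => ?_)
      simp only [Finset.mem_Icc] at hi
      have h1 : (0:ℝ) ≤ 2 * (i:ℝ) - 1 := by
        have : (2:ℝ) ≤ (i:ℝ) := by exact_mod_cast hi.1
        linarith
      have := hanonneg i (by simp [Finset.mem_Icc, hi.1, hi.2])
      positivity
    linarith
  refine ⟨hpos, ?_, ?_, ?_⟩
  -- limit at 0+
  · have hN := tendsto_zero_aux k hk a
    have hD := tendsto_zero_aux k hk (fun i => (2 * (i : ℝ) - 1) * a i)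
    have := hN.div hD one_ne_zero
    rw [div_one] at this
    refine this.congr' ?_
    filter_upwards [self_mem_nhdsWithin] with X hX
    simp only [Pi.div_apply]
    rw [div_div_cancel_aux _ _ _ (ne_of_gt hX), ← hw X hX]
  -- limit at infinity
  · have hN := tendsto_atTop_aux k hk a
    have hD := tendsto_atTop_aux k hk (fun i => (2 * (i : ℝ) - 1) * a i)
    have h2k : (0:ℝ) < 2 * (k:ℝ) - 1 := by
      have : (2:ℝ) ≤ (k:ℝ) := by exact_mod_cast hk
      linarith
    have hDk : (2 * (k:ℝ) - 1) * a k ≠ 0 := by positivity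
    have := hN.div hD hDk
    have hval : a k / ((2 * (k:ℝ) - 1) * a k) = 1 / (2 * (k:ℝ) - 1) := by
      field_simp
    rw [hval] at this
    refine this.congr' ?_
    filter_upwards [eventually_gt_atTop (0:ℝ)] with X hX
    simp only [Pi.div_apply]
    rw [div_div_cancel_aux _ _ _ (by positivity : X ^ k ≠ 0), ← hw X hX]
  -- iff
  · intro n hn
    have hN := tendsto_atTop_aux k hk a
    have hD := tendsto_atTop_aux k hk (fun i => (2 * (i : ℝ) - 1) * a i)
    have h2k : (0:ℝ) < 2 * (k:ℝ) - 1 := by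
      have : (2:ℝ) ≤ (k:ℝ) := by exact_mod_cast hk
      linarith
    have hDk : (2 * (k:ℝ) - 1) * a k ≠ 0 := by positivity
    have hmain : Tendsto w atTop (𝓝 (1 / (2 * (k:ℝ) - 1))) := by
      have := hN.div hD hDk
      have hval : a k / ((2 * (k:ℝ) - 1) * a k) = 1 / (2 * (k:ℝ) - 1) := by
        field_simp
      rw [hval] at this
      refine this.congr' ?_
      filter_upwards [eventually_gt_atTop (0:ℝ)] with X hX
      simp only [Pi.div_apply]
      rw [div_div_cancel_aux _ _ _ (by positivity : X ^ k ≠ 0), ← hw X hX]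
    constructor
    · intro h
      have heq : (1 : ℝ) / n = 1 / (2 * (k:ℝ) - 1) := tendsto_nhds_unique h hmain
      have hn0 : (0:ℝ) < n := by exact_mod_cast hn
      have : (n : ℝ) = 2 * (k:ℝ) - 1 := by
        field_simp at heq
        linarith
      have : (n : ℝ) = ((2 * k - 1 : ℕ) : ℝ) := by
        rw [this]
        push_cast [Nat.cast_sub (by omega : 1 ≤ 2 * k)]
        ring
      exact_mod_cast this
    · intro h
      subst h
      have : ((2 * k - 1 : ℕ) : ℝ) = 2 * (k:ℝ) - 1 := by
        push_cast [Nat.cast_sub (by omega : 1 ≤ 2 * k)]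
        ring
      rw [this]
      exact hmain
end

section
/- Let β > 0 and let F, u be real numbers with β u² ≤ 4. Set A = √(1 + β F²) and B = √(1 − β u²/4). Then the identity (A − B)/β = (F + (1/2) A u)² / (2A) + (A B − 1)² / (2βA) − (1/2) F u holds. Consequently (√(1 + β F²) − √(1 − β u²/4))/β ≥ −(1/2) F u, and, replacing F by −F, also (√(1 + β F²) − √(1 − β u²/4))/β ≥ (1/2) |F u|. -/
/-!
Put `A = √(1 + β F²)` and `B = √(1 - β u²/4)`. Multiplying out, using only `A² = 1 + β F²` and
`B² = 1 - β u²/4`, gives `β (F + A u/2)² + (A B - 1)² - β A F u = 2 A (A - B)`; dividing by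
`2 β A` is the identity. Dropping the two squares gives `-(F u)/2 ≤ (A - B)/β`, and since `A`
is even in `F`, the same bound for `-F` gives `|F u|/2 ≤ (A - B)/β`.
-/

open Real

lemma sub_div_eq_sq_div_add_sq_div_sub {β F u a b : ℝ} (hβ : β ≠ 0) (ha : a ≠ 0)
    (ha2 : a ^ 2 = 1 + β * F ^ 2) (hb2 : b ^ 2 = 1 - β * u ^ 2 / 4) :
    (a - b) / β =
      (F + (1 / 2) * a * u) ^ 2 / (2 * a) + (a * b - 1) ^ 2 / (2 * β * a) - (1 / 2) * F * u := by
  field_simp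
  linear_combination 4 * ha2 - 4 * a ^ 2 * hb2

section BornInfeld

variable {β u : ℝ} (F : ℝ)

lemma bornInfeld_energy_identity (hβ : 0 < β) (hu : β * u ^ 2 ≤ 4) :
    (√(1 + β * F ^ 2) - √(1 - β * u ^ 2 / 4)) / β =
      (F + (1 / 2) * √(1 + β * F ^ 2) * u) ^ 2 / (2 * √(1 + β * F ^ 2)) +
        (√(1 + β * F ^ 2) * √(1 - β * u ^ 2 / 4) - 1) ^ 2 / (2 * β * √(1 + β * F ^ 2)) -
        (1 / 2) * F * u :=
  sub_div_eq_sq_div_add_sq_div_sub hβ.ne' (by positivity) (sq_sqrt (by positivity))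
    (sq_sqrt (by linarith))

lemma neg_half_mul_le_bornInfeld_energy (hβ : 0 < β) (hu : β * u ^ 2 ≤ 4) :
    -((1 / 2) * F * u) ≤ (√(1 + β * F ^ 2) - √(1 - β * u ^ 2 / 4)) / β := by
  rw [bornInfeld_energy_identity F hβ hu]
  have h₁ : 0 ≤ (F + (1 / 2) * √(1 + β * F ^ 2) * u) ^ 2 / (2 * √(1 + β * F ^ 2)) := by
    positivity
  have h₂ : 0 ≤ (√(1 + β * F ^ 2) * √(1 - β * u ^ 2 / 4) - 1) ^ 2 /
      (2 * β * √(1 + β * F ^ 2)) := by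
    positivity
  linarith

lemma half_abs_mul_le_bornInfeld_energy (hβ : 0 < β) (hu : β * u ^ 2 ≤ 4) :
    (1 / 2) * |F * u| ≤ (√(1 + β * F ^ 2) - √(1 - β * u ^ 2 / 4)) / β := by
  have hF := neg_half_mul_le_bornInfeld_energy F hβ hu
  have hnegF := neg_half_mul_le_bornInfeld_energy (-F) hβ hu
  rw [neg_sq] at hnegF
  cases abs_cases (F * u) <;> linarith

end BornInfeld

/-- Completion-of-squares identity underlying the Bogomol'nyi reduction of the
Born–Infeld Abelian Higgs model, and the resulting lower bounds. -/
theorem stmt18 (β F u : ℝ) (hβ : 0 < β) (hu : β * u ^ 2 ≤ 4) :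
    (Real.sqrt (1 + β * F ^ 2) - Real.sqrt (1 - β * u ^ 2 / 4)) / β =
      (F + (1 / 2) * Real.sqrt (1 + β * F ^ 2) * u) ^ 2 / (2 * Real.sqrt (1 + β * F ^ 2)) +
        (Real.sqrt (1 + β * F ^ 2) * Real.sqrt (1 - β * u ^ 2 / 4) - 1) ^ 2 /
          (2 * β * Real.sqrt (1 + β * F ^ 2)) -
        (1 / 2) * F * u ∧
    -((1 / 2) * F * u) ≤ (Real.sqrt (1 + β * F ^ 2) - Real.sqrt (1 - β * u ^ 2 / 4)) / β ∧
    (1 / 2) * |F * u| ≤ (Real.sqrt (1 + β * F ^ 2) - Real.sqrt (1 - β * u ^ 2 / 4)) / β :=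
  ⟨bornInfeld_energy_identity F hβ hu, neg_half_mul_le_bornInfeld_energy F hβ hu,
    half_abs_mul_le_bornInfeld_energy F hβ hu⟩
end
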